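/- arXiv:2301.01781 — 2 statements merged into one kernel-verified Lean document; each statement's English description precedes it below -/
import Mathlib

section
/- Let p₀, p₁, p₂, p₃ ≥ 0 with p₀+p₁+p₂+p₃ = 1, p₀ ≥ p_i for i = 1,2,3, and suppose p₀ = p_j for some j ∈ {1,2,3}. Let N be the qubit Pauli channel N(X) = Σ_{i=0}^{3} p_i σ_i X σ_i†, where σ₀ = I, σ₁ = X_Pauli, σ₂ = Y_Pauli, σ₃ = Z_Pauli. Then there exist unit vectors u, v ∈ ℂ² such that the product input ρ = (u⊗v)(u⊗v)† achieves ⟨φ, ((id⊗N)(ρ)) φ⟩ = p₀ = O(N); i.e., the maximum entanglement fidelity of such a Pauli channel is attained by a separable (product) input. -/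
open Matrix
open scoped Kronecker ComplexOrder

/-- The maximally entangled unit vector `φ = (1/√d) Σ_a e_a ⊗ e_a`. -/
noncomputable def maxEnt (n : Type*) [Fintype n] [DecidableEq n] : n × n → ℂ :=
  fun p => if p.1 = p.2 then ((1 / Real.sqrt (Fintype.card n) : ℝ) : ℂ) else 0

/-- The output `(id ⊗ N)(ρ) = Σ_i (I ⊗ K_i) ρ (I ⊗ K_i)†` of one half of `ρ`
through the channel with Kraus operators `K`. -/
noncomputable def chanOut {n : Type*} [Fintype n] [DecidableEq n] {ι : Type*} [Fintype ι]
    (K : ι → Matrix n n ℂ) (ρ : Matrix (n × n) (n × n) ℂ) : Matrix (n × n) (n × n) ℂ :=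
  ∑ i, ((1 : Matrix n n ℂ) ⊗ₖ K i) * ρ * ((1 : Matrix n n ℂ) ⊗ₖ K i)ᴴ

/-- The entanglement fidelity `⟨φ, ((id⊗N)(ρ)) φ⟩`. -/
noncomputable def fid {n : Type*} [Fintype n] [DecidableEq n] {ι : Type*} [Fintype ι]
    (K : ι → Matrix n n ℂ) (ρ : Matrix (n × n) (n × n) ℂ) : ℂ :=
  star (maxEnt n) ⬝ᵥ (chanOut K ρ *ᵥ maxEnt n)

/-- A density matrix: positive semidefinite with unit trace. -/
def IsDensity {m : Type*} [Fintype m] (ρ : Matrix m m ℂ) : Prop :=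
  ρ.PosSemidef ∧ ρ.trace = 1

/-- The set of (real) entanglement fidelity values achievable with density-matrix inputs;
its supremum is the maximum entanglement fidelity `O(N)`. -/
noncomputable def fidSet {n : Type*} [Fintype n] [DecidableEq n] {ι : Type*} [Fintype ι]
    (K : ι → Matrix n n ℂ) : Set ℝ :=
  {x : ℝ | ∃ ρ : Matrix (n × n) (n × n) ℂ, IsDensity ρ ∧ fid K ρ = (x : ℂ)}

/-- The four Pauli matrices `σ₀ = I, σ₁ = X, σ₂ = Y, σ₃ = Z`. -/
def pauli : Fin 4 → Matrix (Fin 2) (Fin 2) ℂ :=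
  ![1, !![0, 1; 1, 0], !![0, -Complex.I; Complex.I, 0], !![1, 0; 0, -1]]

/-!
With the Bell basis `βᵢ = vec σᵢ / √2`, the entanglement fidelity of the Pauli channel is
`Σᵢ pᵢ ⟨βᵢ, ρ βᵢ⟩`. The `βᵢ` are orthonormal, so for a density matrix `ρ` the weights
`⟨βᵢ, ρ βᵢ⟩` are nonnegative and sum to `tr ρ = 1`, whence the fidelity is at most `p₀`.
If `p₀ = p_j`, the state `(β₀ + β_j)/√2` attains `(p₀ + p_j)/2 = p₀`, and it is a product vector:
`(1 + σ_j)/2 = e e†` is the projector onto the `+1` eigenvector `e` of `σ_j`, and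
`vec (e e†) = ē ⊗ e`.
-/
lemma star_dotProduct_mul_mul_conjTranspose_mulVec {m : Type*} [Fintype m]
    (M ρ : Matrix m m ℂ) (x : m → ℂ) :
    star x ⬝ᵥ ((M * ρ * Mᴴ) *ᵥ x) = star (Mᴴ *ᵥ x) ⬝ᵥ (ρ *ᵥ (Mᴴ *ᵥ x)) := by
  rw [Matrix.mul_assoc, ← mulVec_mulVec, dotProduct_mulVec, star_mulVec,
    conjTranspose_conjTranspose, mulVec_mulVec]

lemma star_dotProduct_vecMulVec_mulVec {m : Type*} [Fintype m] (w b : m → ℂ) :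
    star b ⬝ᵥ (vecMulVec w (star w) *ᵥ b) = (star b ⬝ᵥ w) * (star w ⬝ᵥ b) := by
  rw [vecMulVec_mulVec, op_smul_eq_smul, dotProduct_smul, smul_eq_mul, mul_comm]

lemma sum_star_dotProduct_mulVec_eq_trace {m ι : Type*} [Fintype m] [Fintype ι] [DecidableEq m]
    [DecidableEq ι] (b : ι → m → ℂ) (hb : ∀ i k, star (b i) ⬝ᵥ b k = if i = k then 1 else 0)
    (hcard : Fintype.card ι = Fintype.card m) (ρ : Matrix m m ℂ) :
    ∑ i, star (b i) ⬝ᵥ (ρ *ᵥ b i) = ρ.trace := by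
  set B : Matrix m ι ℂ := of fun q i => b i q
  have hBB : Bᴴ * B = 1 := by
    ext i k
    simpa [B, mul_apply, dotProduct, one_apply] using hb i k
  have hBB' : B * Bᴴ = 1 := (mul_eq_one_comm_of_card_eq ι m ℂ hcard).mp hBB
  calc ∑ i, star (b i) ⬝ᵥ (ρ *ᵥ b i) = (Bᴴ * ρ * B).trace := by
        simp only [B, trace, diag, mul_apply, dotProduct, mulVec, Finset.mul_sum, Finset.sum_mul,
          conjTranspose_apply, of_apply, Pi.star_apply]
        refine Finset.sum_congr rfl fun i _ => ?_
        rw [Finset.sum_comm]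
        exact Finset.sum_congr rfl fun _ _ => Finset.sum_congr rfl fun _ _ => (mul_assoc ..).symm
    _ = ρ.trace := by rw [Matrix.mul_assoc, trace_mul_comm, Matrix.mul_assoc, hBB', mul_one]

lemma isDensity_vecMulVec_self_star {m : Type*} [Fintype m] (w : m → ℂ)
    (hw : star w ⬝ᵥ w = 1) : IsDensity (vecMulVec w (star w)) :=
  ⟨posSemidef_vecMulVec_self_star w, by rw [trace_vecMulVec, dotProduct_comm, hw]⟩

section maxEnt

variable {n : Type*} [Fintype n] [DecidableEq n]

lemma maxEnt_eq_smul_vec_one :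
    maxEnt n = ((1 / √(Fintype.card n) : ℝ) : ℂ) • vec (1 : Matrix n n ℂ) := by
  ext ⟨a, b⟩
  simp [maxEnt, one_apply, eq_comm]

lemma one_kronecker_mulVec_maxEnt (A : Matrix n n ℂ) :
    ((1 : Matrix n n ℂ) ⊗ₖ A) *ᵥ maxEnt n = ((1 / √(Fintype.card n) : ℝ) : ℂ) • vec A := by
  rw [maxEnt_eq_smul_vec_one, mulVec_smul, kronecker_mulVec_vec, mul_one, transpose_one, mul_one]

lemma fid_eq_sum {ι : Type*} [Fintype ι] (K : ι → Matrix n n ℂ) (ρ : Matrix (n × n) (n × n) ℂ) :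
    fid K ρ = ∑ i, star (((1 / √(Fintype.card n) : ℝ) : ℂ) • vec (K i)ᴴ) ⬝ᵥ
      (ρ *ᵥ (((1 / √(Fintype.card n) : ℝ) : ℂ) • vec (K i)ᴴ)) := by
  simp only [fid, chanOut, sum_mulVec, dotProduct_sum]
  refine Finset.sum_congr rfl fun i _ => ?_
  rw [star_dotProduct_mul_mul_conjTranspose_mulVec, conjTranspose_kronecker, conjTranspose_one,
    one_kronecker_mulVec_maxEnt]

end maxEnt

noncomputable def pauliKraus (p : Fin 4 → ℝ) (i : Fin 4) : Matrix (Fin 2) (Fin 2) ℂ :=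
  ((√(p i) : ℝ) : ℂ) • pauli i

lemma pauli_conjTranspose (i : Fin 4) : (pauli i)ᴴ = pauli i := by
  fin_cases i <;> ext a b <;> fin_cases a <;> fin_cases b <;> simp [pauli]

lemma trace_pauli_mul_pauli (i k : Fin 4) :
    (pauli i * pauli k).trace = if i = k then 2 else 0 := by
  fin_cases i <;> fin_cases k <;> norm_num [pauli, trace, Fin.sum_univ_two, mul_apply]

lemma ofReal_one_div_sqrt_two_mul_self : ((1 / √2 : ℝ) : ℂ) * ((1 / √2 : ℝ) : ℂ) = 2⁻¹ := by
  rw [← Complex.ofReal_mul, div_mul_div_comm, Real.mul_self_sqrt zero_le_two]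
  norm_num

noncomputable def bell (i : Fin 4) : Fin 2 × Fin 2 → ℂ := ((1 / √2 : ℝ) : ℂ) • vec (pauli i)

lemma star_bell_dotProduct_bell (i k : Fin 4) :
    star (bell i) ⬝ᵥ bell k = if i = k then 1 else 0 := by
  rw [bell, bell, star_smul, smul_dotProduct, dotProduct_smul, star_vec_dotProduct_vec,
    pauli_conjTranspose, trace_pauli_mul_pauli, smul_smul, smul_eq_mul, Complex.star_def,
    Complex.conj_ofReal, ofReal_one_div_sqrt_two_mul_self]
  split_ifs <;> norm_num

lemma sum_star_bell_dotProduct_mulVec_bell (ρ : Matrix (Fin 2 × Fin 2) (Fin 2 × Fin 2) ℂ) :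
    ∑ i, star (bell i) ⬝ᵥ (ρ *ᵥ bell i) = ρ.trace :=
  sum_star_dotProduct_mulVec_eq_trace bell star_bell_dotProduct_bell (by simp) ρ

lemma fid_pauliKraus {p : Fin 4 → ℝ} (hp : ∀ i, 0 ≤ p i)
    (ρ : Matrix (Fin 2 × Fin 2) (Fin 2 × Fin 2) ℂ) :
    fid (pauliKraus p) ρ = ∑ i, (p i : ℂ) * (star (bell i) ⬝ᵥ (ρ *ᵥ bell i)) := by
  rw [fid_eq_sum]
  refine Finset.sum_congr rfl fun i _ => ?_
  have hK : ((1 / √(Fintype.card (Fin 2)) : ℝ) : ℂ) • vec (pauliKraus p i)ᴴ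
      = ((√(p i) : ℝ) : ℂ) • bell i := by
    rw [pauliKraus, conjTranspose_smul, pauli_conjTranspose, Complex.star_def,
      Complex.conj_ofReal, vec_smul, bell, smul_comm, Fintype.card_fin, Nat.cast_ofNat]
  rw [hK, star_smul, smul_dotProduct, mulVec_smul, dotProduct_smul, smul_smul, smul_eq_mul,
    Complex.star_def, Complex.conj_ofReal, ← Complex.ofReal_mul, Real.mul_self_sqrt (hp i)]

lemma fid_pauliKraus_le {p : Fin 4 → ℝ} (hp : ∀ i, 0 ≤ p i) (hmax : ∀ i, p i ≤ p 0)
    {ρ : Matrix (Fin 2 × Fin 2) (Fin 2 × Fin 2) ℂ} (hρ : IsDensity ρ) :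
    fid (pauliKraus p) ρ ≤ p 0 := by
  have hnonneg (i : Fin 4) : 0 ≤ star (bell i) ⬝ᵥ (ρ *ᵥ bell i) :=
    hρ.1.dotProduct_mulVec_nonneg (bell i)
  calc fid (pauliKraus p) ρ = ∑ i, (p i : ℂ) * (star (bell i) ⬝ᵥ (ρ *ᵥ bell i)) :=
        fid_pauliKraus hp ρ
    _ ≤ ∑ i, (p 0 : ℂ) * (star (bell i) ⬝ᵥ (ρ *ᵥ bell i)) :=
        Finset.sum_le_sum fun i _ =>
          mul_le_mul_of_nonneg_right (Complex.real_le_real.mpr (hmax i)) (hnonneg i)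
    _ = p 0 := by
        rw [← Finset.mul_sum, sum_star_bell_dotProduct_mulVec_bell, hρ.2, mul_one]

noncomputable def bellPair (i₀ i₁ : Fin 4) : Fin 2 × Fin 2 → ℂ :=
  ((1 / √2 : ℝ) : ℂ) • (bell i₀ + bell i₁)

section bellPair

variable {i₀ i₁ : Fin 4}

lemma star_bell_dotProduct_bellPair (i : Fin 4) :
    star (bell i) ⬝ᵥ bellPair i₀ i₁
      = ((1 / √2 : ℝ) : ℂ) * ((if i = i₀ then 1 else 0) + if i = i₁ then 1 else 0) := by
  rw [bellPair, dotProduct_smul, dotProduct_add, star_bell_dotProduct_bell,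
    star_bell_dotProduct_bell, smul_eq_mul]

lemma star_bellPair_dotProduct_bell (i : Fin 4) :
    star (bellPair i₀ i₁) ⬝ᵥ bell i
      = ((1 / √2 : ℝ) : ℂ) * ((if i = i₀ then 1 else 0) + if i = i₁ then 1 else 0) := by
  rw [bellPair, star_smul, smul_dotProduct, star_add, add_dotProduct, star_bell_dotProduct_bell,
    star_bell_dotProduct_bell, smul_eq_mul, Complex.star_def, Complex.conj_ofReal]
  simp only [@eq_comm _ i₀, @eq_comm _ i₁]

lemma star_bellPair_dotProduct_self (h : i₀ ≠ i₁) :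
    star (bellPair i₀ i₁) ⬝ᵥ bellPair i₀ i₁ = 1 := by
  nth_rewrite 2 [bellPair]
  rw [dotProduct_smul, dotProduct_add, star_bellPair_dotProduct_bell,
    star_bellPair_dotProduct_bell, if_pos rfl, if_neg h, if_neg h.symm, if_pos rfl, smul_eq_mul,
    ← mul_add, ← mul_assoc, ofReal_one_div_sqrt_two_mul_self]
  norm_num

lemma fid_pauliKraus_vecMulVec_bellPair {p : Fin 4 → ℝ} (hp : ∀ i, 0 ≤ p i) (h : i₀ ≠ i₁) :
    fid (pauliKraus p) (vecMulVec (bellPair i₀ i₁) (star (bellPair i₀ i₁)))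
      = (((p i₀ + p i₁) / 2 : ℝ) : ℂ) := by
  simp only [fid_pauliKraus hp, star_dotProduct_vecMulVec_mulVec, star_bell_dotProduct_bellPair,
    star_bellPair_dotProduct_bell]
  have hterm (i : Fin 4) :
      (p i : ℂ) * (((1 / √2 : ℝ) : ℂ) * ((if i = i₀ then 1 else 0) + if i = i₁ then 1 else 0) *
        (((1 / √2 : ℝ) : ℂ) * ((if i = i₀ then 1 else 0) + if i = i₁ then 1 else 0)))
      = (if i = i₀ then (p i₀ / 2 : ℂ) else 0) + if i = i₁ then (p i₁ / 2 : ℂ) else 0 := by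
    rw [mul_mul_mul_comm, ofReal_one_div_sqrt_two_mul_self]
    split_ifs <;> simp_all <;> ring
  simp only [hterm, Finset.sum_add_distrib, Finset.sum_ite_eq', Finset.mem_univ, if_true]
  push_cast
  ring

end bellPair

lemma exists_vecMulVec_eq_half_one_add_pauli {j : Fin 4} (hj : j ≠ 0) :
    ∃ e : Fin 2 → ℂ, vecMulVec e (star e) = (1 / 2 : ℂ) • (1 + pauli j) := by
  have hc : ((√2 : ℝ) : ℂ)⁻¹ ^ 2 = 2⁻¹ := by
    rw [inv_pow, ← Complex.ofReal_pow, Real.sq_sqrt zero_le_two, Complex.ofReal_ofNat]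
  fin_cases j
  · exact absurd rfl hj
  · refine ⟨((1 / √2 : ℝ) : ℂ) • ![1, 1], ?_⟩
    ext a b
    fin_cases a <;> fin_cases b <;> simp [pauli, vecMulVec_apply] <;> ring_nf <;> simp [hc]
  · refine ⟨((1 / √2 : ℝ) : ℂ) • ![1, Complex.I], ?_⟩
    ext a b
    fin_cases a <;> fin_cases b <;> simp [pauli, vecMulVec_apply] <;> ring_nf <;>
      simp [hc, mul_comm]
  · refine ⟨![1, 0], ?_⟩
    ext a b
    fin_cases a <;> fin_cases b <;> norm_num [pauli, vecMulVec_apply]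

lemma exists_product_eq_bellPair {j : Fin 4} (hj : j ≠ 0) :
    ∃ u v : Fin 2 → ℂ, (∑ a, Complex.normSq (u a)) = 1 ∧ (∑ a, Complex.normSq (v a)) = 1 ∧
      (fun q : Fin 2 × Fin 2 => u q.1 * v q.2) = bellPair 0 j := by
  obtain ⟨e, he⟩ := exists_vecMulVec_eq_half_one_add_pauli hj
  have hunit : ∑ a, Complex.normSq (e a) = 1 := by
    have htr : (pauli j).trace = 0 := by simpa [pauli, hj.symm] using trace_pauli_mul_pauli 0 j
    have := congrArg trace he
    rw [trace_vecMulVec, trace_smul, trace_add, htr, trace_one, dotProduct_comm] at this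
    apply Complex.ofReal_injective
    push_cast
    norm_num [dotProduct] at this
    simpa [Complex.normSq_eq_conj_mul_self] using this
  refine ⟨star e, e, by simpa [Complex.normSq_conj] using hunit, hunit, ?_⟩
  have : bellPair 0 j = vec (vecMulVec e (star e)) := by
    rw [he, vec_smul, vec_add, bellPair, bell, bell, ← smul_add, smul_smul,
      ofReal_one_div_sqrt_two_mul_self, one_div]
    rfl
  rw [this]
  ext ⟨a, b⟩
  simp [vecMulVec_apply, mul_comm]

theorem stmt_14_general (p : Fin 4 → ℝ) (hp : ∀ i, 0 ≤ p i)
    (hmax : ∀ i, p i ≤ p 0) (j : Fin 4) (hj : j ≠ 0) (hpj : p 0 = p j)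
    (K : Fin 4 → Matrix (Fin 2) (Fin 2) ℂ)
    (hK : K = fun i => ((Real.sqrt (p i) : ℝ) : ℂ) • pauli i) :
    ∃ u v : Fin 2 → ℂ,
      (∑ a, Complex.normSq (u a)) = 1 ∧ (∑ a, Complex.normSq (v a)) = 1 ∧
      fid K (Matrix.vecMulVec (fun q => u q.1 * v q.2) (star fun q => u q.1 * v q.2))
        = ((p 0 : ℝ) : ℂ) ∧
      IsGreatest (fidSet K) (p 0) := by
  obtain ⟨u, v, hu, hv, huv⟩ := exists_product_eq_bellPair hj
  obtain rfl : K = pauliKraus p := hK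
  have hfid :
      fid (pauliKraus p) (vecMulVec (fun q => u q.1 * v q.2) (star fun q => u q.1 * v q.2))
        = ((p 0 : ℝ) : ℂ) := by
    rw [huv, fid_pauliKraus_vecMulVec_bellPair hp hj.symm, ← hpj, add_self_div_two]
  refine ⟨u, v, hu, hv, hfid, ⟨_, ?_, hfid⟩, ?_⟩
  · rw [huv]
    exact isDensity_vecMulVec_self_star _ (star_bellPair_dotProduct_self hj.symm)
  · rintro x ⟨ρ, hρ, hx⟩
    exact Complex.real_le_real.mp (hx ▸ fid_pauliKraus_le hp hmax hρ)

/-- For the qubit Pauli channel `N(X) = Σ_i p_i σ_i X σ_i†` with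
`p₀ ≥ p_i` and `p₀ = p_j` for some `j ∈ {1,2,3}`, there are unit vectors `u, v ∈ ℂ²`
such that the product input `ρ = (u⊗v)(u⊗v)†` achieves
`⟨φ, ((id⊗N)(ρ)) φ⟩ = p₀ = O(N)`: the maximum entanglement fidelity is attained by a
separable input. -/
theorem stmt_14 (p : Fin 4 → ℝ) (hp : ∀ i, 0 ≤ p i) (hsum : ∑ i, p i = 1)
    (hmax : ∀ i, p i ≤ p 0) (j : Fin 4) (hj : j ≠ 0) (hpj : p 0 = p j)
    (K : Fin 4 → Matrix (Fin 2) (Fin 2) ℂ)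
    (hK : K = fun i => ((Real.sqrt (p i) : ℝ) : ℂ) • pauli i) :
    ∃ u v : Fin 2 → ℂ,
      (∑ a, Complex.normSq (u a)) = 1 ∧ (∑ a, Complex.normSq (v a)) = 1 ∧
      fid K (Matrix.vecMulVec (fun q => u q.1 * v q.2) (star fun q => u q.1 * v q.2))
        = ((p 0 : ℝ) : ℂ) ∧
      IsGreatest (fidSet K) (p 0) :=
  stmt_14_general p hp hmax j hj hpj K hK
end

section
/- Let N : M_2(ℂ) → M_2(ℂ) be a qubit channel with Kraus operators {K_i}, and suppose the largest eigenvalue λ_max of its Choi matrix J^N (a 4×4 positive semidefinite matrix) has multiplicity at least 2. Then the maximum entanglement fidelity O(N) = λ_max/2 can be attained by a separable input: there exist unit vectors u, v ∈ ℂ² such that ⟨φ, ((id⊗N)((u⊗v)(u⊗v)†)) φ⟩ = λ_max/2 = O(N). -/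
open Matrix
open scoped Kronecker ComplexOrder

/-- The Choi matrix `J^N = Σ_{j,k} E_{jk} ⊗ N(E_{jk})` of the channel with Kraus
operators `K`. -/
noncomputable def choi {n m : Type*} [Fintype n] [DecidableEq n] [Fintype m] {ι : Type*}
    [Fintype ι] (K : ι → Matrix m n ℂ) : Matrix (n × m) (n × m) ℂ :=
  Matrix.of fun p q => (∑ i, K i * Matrix.single p.1 q.1 (1 : ℂ) * (K i)ᴴ) p.2 q.2

/-!
Let `ρᶠ` be the transpose of `ρ` with the two tensor factors exchanged. Expanding the sums gives
`⟨φ, (id ⊗ N)(ρ) φ⟩ = tr (J^N ρᶠ) / 2`, and `ρ ↦ ρᶠ` preserves density matrices, so the fidelity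
is at most `λ_max / 2`, with equality when `ρᶠ` is the projection onto a unit `λ_max`-eigenvector.
If `λ_max` is degenerate, its eigenspace contains a nonzero product vector `a ⊗ b`: reshaping the
vectors of a plane in `ℂ² ⊗ ℂ²` into `2 × 2` matrices, the determinant of `s X + t Y` is a binary
quadratic form, which has a nontrivial zero over `ℂ`, and a singular `2 × 2` matrix is a rank-one
product `a bᵀ`. The input `b̄ ⊗ ā` has `ρᶠ = (a ⊗ b)(a ⊗ b)†`.
-/

section FlipTranspose

variable {n : Type*}

def flipTranspose (ρ : Matrix (n × n) (n × n) ℂ) : Matrix (n × n) (n × n) ℂ :=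
  ρᵀ.submatrix Prod.swap Prod.swap

theorem flipTranspose_vecMulVec (x w : n × n → ℂ) :
    flipTranspose (vecMulVec x w) = vecMulVec (w ∘ Prod.swap) (x ∘ Prod.swap) := by
  ext p q
  simp [flipTranspose, vecMulVec_apply]

variable [Fintype n]

theorem IsDensity.flipTranspose {ρ : Matrix (n × n) (n × n) ℂ} (hρ : IsDensity ρ) :
    IsDensity (flipTranspose ρ) := by
  refine ⟨hρ.1.transpose.submatrix _, ?_⟩
  rw [← hρ.2, ← trace_transpose ρ]
  exact Fintype.sum_equiv (Equiv.prodComm n n) _ _ fun p => rfl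

end FlipTranspose

section Tensor

variable {n : Type*} [Fintype n]

theorem tensor_dotProduct_star (a b : n → ℂ) :
    (fun p : n × n => a p.1 * b p.2) ⬝ᵥ star (fun p : n × n => a p.1 * b p.2)
      = ((∑ i, Complex.normSq (a i)) * ∑ j, Complex.normSq (b j) : ℝ) := by
  simp only [dotProduct, Fintype.sum_prod_type, Pi.star_apply, Complex.star_def, map_mul,
    Complex.ofReal_mul, Complex.ofReal_sum, ← Complex.mul_conj, Finset.sum_mul_sum]
  exact Finset.sum_congr rfl fun i _ => Finset.sum_congr rfl fun j _ => by ring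

theorem isDensity_vecMulVec_tensor {a b : n → ℂ} (ha : ∑ i, Complex.normSq (a i) = 1)
    (hb : ∑ i, Complex.normSq (b i) = 1) :
    IsDensity (vecMulVec (fun p : n × n => a p.1 * b p.2) (star fun p : n × n => a p.1 * b p.2)) :=
  ⟨posSemidef_vecMulVec_self_star _, by simp [trace_vecMulVec, tensor_dotProduct_star, ha, hb]⟩

end Tensor

theorem Matrix.IsHermitian.trace_mul_le_iSup_eigenvalues {m : Type*} [Fintype m] [DecidableEq m]
    {A σ : Matrix m m ℂ} (hA : A.IsHermitian) (hσ : IsDensity σ) :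
    (A * σ).trace ≤ ((⨆ k, hA.eigenvalues k : ℝ) : ℂ) := by
  set U : Matrix m m ℂ := (hA.eigenvectorUnitary : Matrix m m ℂ)
  set τ := Uᴴ * σ * U
  have hUU : U * Uᴴ = 1 := by
    simpa [U, star_eq_conjTranspose] using Unitary.mul_star_self_of_mem hA.eigenvectorUnitary.2
  have hτ : τ.PosSemidef := hσ.1.conjTranspose_mul_mul_same U
  have htr : ∑ k, τ k k = 1 := by
    change τ.trace = 1
    rw [trace_mul_cycle, hUU, Matrix.one_mul, hσ.2]
  have hle : ∀ k, hA.eigenvalues k ≤ ⨆ k, hA.eigenvalues k :=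
    le_ciSup (Set.finite_range _).bddAbove
  calc (A * σ).trace = ∑ k, (hA.eigenvalues k : ℂ) * τ k k := by
        conv_lhs => rw [hA.spectral_theorem]
        rw [Unitary.conjStarAlgAut_apply, star_eq_conjTranspose, Matrix.mul_assoc,
          Matrix.mul_assoc, trace_mul_comm, Matrix.mul_assoc]
        simp [trace, diagonal_mul, τ, U]
    _ ≤ ∑ k, ((⨆ k, hA.eigenvalues k : ℝ) : ℂ) * τ k k :=
        Finset.sum_le_sum fun k _ =>
          mul_le_mul_of_nonneg_right (Complex.real_le_real.mpr (hle k)) hτ.diag_nonneg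
    _ = ((⨆ k, hA.eigenvalues k : ℝ) : ℂ) := by
        rw [← Finset.mul_sum, htr, mul_one]

section Fidelity

variable {n : Type*} [Fintype n] [DecidableEq n] {ι : Type*} [Fintype ι]

theorem choi_apply {m : Type*} [Fintype m] (K : ι → Matrix m n ℂ) (p q : n × m) :
    choi K p q = ∑ i, K i p.2 p.1 * star (K i q.2 q.1) := by
  simp [choi, Matrix.sum_apply, Matrix.mul_apply, Matrix.single_apply, ite_and]

theorem star_maxEnt_dotProduct_mulVec_maxEnt (M : Matrix (n × n) (n × n) ℂ) :
    star (maxEnt n) ⬝ᵥ (M *ᵥ maxEnt n) = (Fintype.card n : ℂ)⁻¹ * ∑ a, ∑ b, M (a, a) (b, b) := by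
  have hc : ((1 / √(Fintype.card n) : ℝ) : ℂ) * ((1 / √(Fintype.card n) : ℝ) : ℂ)
      = (Fintype.card n : ℂ)⁻¹ := by
    rw [← Complex.ofReal_mul, div_mul_div_comm, one_mul, Real.mul_self_sqrt (Nat.cast_nonneg _)]
    simp
  simp only [dotProduct, mulVec, maxEnt, Fintype.sum_prod_type, Pi.star_apply,
    apply_ite (star : ℂ → ℂ), star_zero, ite_mul, zero_mul, Finset.sum_ite_eq, Finset.mem_univ,
    if_true, Finset.mul_sum, mul_ite, mul_zero, Complex.star_def, Complex.conj_ofReal,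
    Finset.sum_ite_irrel, Finset.sum_const_zero, ← hc]
  exact Finset.sum_congr rfl fun a _ => Finset.sum_congr rfl fun b _ => by ring

theorem fid_eq_trace_choi_mul_flipTranspose (K : ι → Matrix n n ℂ)
    (ρ : Matrix (n × n) (n × n) ℂ) :
    fid K ρ = (Fintype.card n : ℂ)⁻¹ * (choi K * flipTranspose ρ).trace := by
  rw [fid, star_maxEnt_dotProduct_mulVec_maxEnt]
  congr 1
  simp only [chanOut, Matrix.sum_apply, trace, diag, Matrix.mul_apply, choi_apply, flipTranspose,
    submatrix_apply, transpose_apply, kroneckerMap_apply, conjTranspose_apply, one_apply,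
    Fintype.sum_prod_type, Finset.sum_mul, ite_mul, one_mul, zero_mul, Prod.swap]
  simp only [apply_ite (star : ℂ → ℂ), star_zero, mul_ite, mul_zero, Finset.sum_ite_eq,
    Finset.mem_univ, if_true, Finset.sum_ite_irrel, Finset.sum_const_zero]
  -- both sides sum `K i a d * ρ (a, d) (b, f) * conj (K i b f)` over `a b d f i`, in two orders
  conv_lhs => enter [2, a, 2, b, 2, i]; rw [Finset.sum_comm]
  conv_lhs => enter [2, a, 2, b]; rw [Finset.sum_comm]
  conv_lhs => enter [2, a]; rw [Finset.sum_comm]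
  rw [Finset.sum_comm]
  conv_lhs => enter [2, d, 2, a, 2, b]; rw [Finset.sum_comm]
  conv_lhs => enter [2, d, 2, a]; rw [Finset.sum_comm]
  simp only [mul_right_comm]

theorem fid_le_iSup_eigenvalues_div_card {K : ι → Matrix n n ℂ} (hJ : (choi K).IsHermitian)
    {ρ : Matrix (n × n) (n × n) ℂ} (hρ : IsDensity ρ) :
    fid K ρ ≤ (((⨆ k, hJ.eigenvalues k) / Fintype.card n : ℝ) : ℂ) := by
  rw [fid_eq_trace_choi_mul_flipTranspose, Complex.ofReal_div, div_eq_inv_mul,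
    Complex.ofReal_natCast]
  exact mul_le_mul_of_nonneg_left (hJ.trace_mul_le_iSup_eigenvalues hρ.flipTranspose)
    (by positivity)

theorem fid_vecMulVec_tensor_star (K : ι → Matrix n n ℂ) {a b : n → ℂ}
    (ha : ∑ i, Complex.normSq (a i) = 1) (hb : ∑ i, Complex.normSq (b i) = 1) {μ : ℂ}
    (h : choi K *ᵥ (fun p => a p.1 * b p.2) = μ • fun p => a p.1 * b p.2) :
    fid K (vecMulVec (fun q => star b q.1 * star a q.2) (star fun q => star b q.1 * star a q.2))
      = μ / Fintype.card n := by
  have hswap : (star fun q : n × n => star b q.1 * star a q.2) ∘ Prod.swap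
      = fun p => a p.1 * b p.2 := by
    ext p; simp [mul_comm]
  have hswap' : (fun q : n × n => star b q.1 * star a q.2) ∘ Prod.swap
      = star fun p => a p.1 * b p.2 := by
    ext p; simp [mul_comm]
  rw [fid_eq_trace_choi_mul_flipTranspose, flipTranspose_vecMulVec, hswap, hswap', mul_vecMulVec,
    h, trace_vecMulVec, smul_dotProduct, tensor_dotProduct_star, ha, hb]
  simp [div_eq_inv_mul]

end Fidelity

open Polynomial in
theorem Matrix.exists_det_smul_add_smul_eq_zero {K : Type*} [Field K] [IsAlgClosed K]
    (M N : Matrix (Fin 2) (Fin 2) K) : ∃ s t : K, (s ≠ 0 ∨ t ≠ 0) ∧ (s • M + t • N).det = 0 := by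
  by_cases hM : M.det = 0
  · exact ⟨1, 0, .inl one_ne_zero, by simpa using hM⟩
  set m := M 0 0 * N 1 1 + N 0 0 * M 1 1 - M 0 1 * N 1 0 - N 0 1 * M 1 0
  obtain ⟨s, hs⟩ := IsAlgClosed.exists_root (C M.det * X ^ 2 + C m * X + C N.det)
    (by rw [degree_quadratic hM]; decide)
  refine ⟨s, 1, .inr one_ne_zero, ?_⟩
  simp only [IsRoot, eval_add, eval_mul, eval_C, eval_pow, eval_X, det_fin_two] at hs
  simp only [det_fin_two, add_apply, smul_apply, smul_eq_mul, one_mul]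
  linear_combination hs

theorem Matrix.exists_eq_vecMulVec_of_det_eq_zero {K : Type*} [Field K]
    (M : Matrix (Fin 2) (Fin 2) K) (hM : M.det = 0) : ∃ a b : Fin 2 → K, M = vecMulVec a b := by
  by_cases h0 : M 0 = 0
  · refine ⟨![0, 1], M 1, ?_⟩
    ext i j
    fin_cases i <;> simp [vecMulVec_apply, h0]
  obtain ⟨w, hw, hwM⟩ := exists_vecMul_eq_zero_iff.mpr hM
  have hrel : w 0 • M 0 + w 1 • M 1 = 0 := by
    ext j
    simpa [vecMul, dotProduct, Fin.sum_univ_two] using congrFun hwM j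
  have hw1 : w 1 ≠ 0 := by
    intro hw1
    have hw0 : w 0 ≠ 0 := fun hw0 => hw (by ext i; fin_cases i <;> simp [hw0, hw1])
    exact h0 (by simpa [hw1, hw0] using hrel)
  refine ⟨![1, -(w 0 / w 1)], M 0, ?_⟩
  ext i j
  fin_cases i
  · simp [vecMulVec_apply]
  · have hj := congrFun hrel j
    simp only [Pi.add_apply, Pi.smul_apply, smul_eq_mul, Pi.zero_apply] at hj
    simp [vecMulVec_apply]
    field_simp
    linear_combination hj

theorem exists_tensor_ne_zero_mem_span_pair {K : Type*} [Field K] [IsAlgClosed K]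
    {w₁ w₂ : Fin 2 × Fin 2 → K} (hw : LinearIndependent K ![w₁, w₂]) :
    ∃ a b : Fin 2 → K, (fun p : Fin 2 × Fin 2 => a p.1 * b p.2) ≠ 0 ∧
      (fun p => a p.1 * b p.2) ∈ Submodule.span K {w₁, w₂} := by
  obtain ⟨s, t, hst, hdet⟩ :=
    Matrix.exists_det_smul_add_smul_eq_zero (Matrix.of (Function.curry w₁))
      (Matrix.of (Function.curry w₂))
  obtain ⟨a, b, hab⟩ := Matrix.exists_eq_vecMulVec_of_det_eq_zero _ hdet
  have hcomb : (fun p : Fin 2 × Fin 2 => a p.1 * b p.2) = s • w₁ + t • w₂ := by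
    ext p
    simpa [vecMulVec_apply] using (congrFun (congrFun hab p.1) p.2).symm
  refine ⟨a, b, fun h => ?_, Submodule.mem_span_pair.mpr ⟨s, t, hcomb.symm⟩⟩
  obtain ⟨rfl, rfl⟩ := LinearIndependent.pair_iff.mp hw s t (hcomb ▸ h)
  simp at hst

theorem exists_sum_normSq_mul_eq_one {ι : Type*} [Fintype ι] {a : ι → ℂ} (ha : a ≠ 0) :
    ∃ c : ℂ, ∑ i, Complex.normSq (c * a i) = 1 := by
  have hpos : 0 < ∑ i, Complex.normSq (a i) := by
    obtain ⟨i, hi⟩ := Function.ne_iff.mp ha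
    exact Finset.sum_pos' (fun i _ => Complex.normSq_nonneg _)
      ⟨i, Finset.mem_univ _, Complex.normSq_pos.mpr hi⟩
  refine ⟨((√(∑ i, Complex.normSq (a i)))⁻¹ : ℝ), ?_⟩
  simp only [Complex.normSq_mul, Complex.normSq_ofReal, ← Finset.mul_sum, ← mul_inv,
    Real.mul_self_sqrt hpos.le, inv_mul_cancel₀ hpos.ne']

theorem exists_unit_tensor_mem_span_pair {w₁ w₂ : Fin 2 × Fin 2 → ℂ}
    (hw : LinearIndependent ℂ ![w₁, w₂]) :
    ∃ a b : Fin 2 → ℂ, ∑ i, Complex.normSq (a i) = 1 ∧ ∑ i, Complex.normSq (b i) = 1 ∧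
      (fun p : Fin 2 × Fin 2 => a p.1 * b p.2) ∈ Submodule.span ℂ {w₁, w₂} := by
  obtain ⟨a, b, hab, hmem⟩ := exists_tensor_ne_zero_mem_span_pair hw
  obtain ⟨c, hc⟩ := exists_sum_normSq_mul_eq_one (a := a) fun h => hab (by ext; simp [h])
  obtain ⟨d, hd⟩ := exists_sum_normSq_mul_eq_one (a := b) fun h => hab (by ext; simp [h])
  refine ⟨fun i => c * a i, fun i => d * b i, hc, hd, ?_⟩
  convert Submodule.smul_mem _ (c * d) hmem using 1
  ext p
  simp only [Pi.smul_apply, smul_eq_mul]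
  ring

namespace Matrix.IsHermitian

variable {m : Type*} [Fintype m] [DecidableEq m] {A : Matrix m m ℂ}

theorem linearIndependent_eigenvectorBasis_pair (hA : A.IsHermitian) {k l : m} (hkl : k ≠ l) :
    LinearIndependent ℂ ![⇑(hA.eigenvectorBasis k), ⇑(hA.eigenvectorBasis l)] := by
  refine LinearIndependent.pair_iff.mpr fun s t h => ?_
  refine (LinearIndepOn.pair_iff _ hkl).mp
    (hA.eigenvectorBasis.orthonormal.linearIndependent.linearIndepOn _) s t ?_
  apply WithLp.ofLp_injective
  simpa using h

theorem exists_unit_tensor_mulVec_eq_smul {A : Matrix (Fin 2 × Fin 2) (Fin 2 × Fin 2) ℂ}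
    (hA : A.IsHermitian) {k l : Fin 2 × Fin 2} (hkl : k ≠ l)
    (hlk : hA.eigenvalues l = hA.eigenvalues k) :
    ∃ a b : Fin 2 → ℂ, ∑ i, Complex.normSq (a i) = 1 ∧ ∑ i, Complex.normSq (b i) = 1 ∧
      A *ᵥ (fun p => a p.1 * b p.2) = (hA.eigenvalues k : ℂ) • fun p => a p.1 * b p.2 := by
  obtain ⟨a, b, ha, hb, hmem⟩ :=
    exists_unit_tensor_mem_span_pair (hA.linearIndependent_eigenvectorBasis_pair hkl)
  have hspan : Submodule.span ℂ {⇑(hA.eigenvectorBasis k), ⇑(hA.eigenvectorBasis l)}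
      ≤ Module.End.eigenspace (toLin' A) (hA.eigenvalues k) := by
    rw [Submodule.span_le]
    rintro _ (rfl | rfl) <;>
      rw [SetLike.mem_coe, Module.End.mem_eigenspace_iff, toLin'_apply,
        hA.mulVec_eigenvectorBasis, RCLike.real_smul_eq_coe_smul (K := ℂ)]
    · rfl
    · rw [hlk]; rfl
  exact ⟨a, b, ha, hb, Module.End.mem_eigenspace_iff.mp (hspan hmem)⟩

end Matrix.IsHermitian

theorem stmt_19_general {ι : Type*} [Fintype ι]
    (K : ι → Matrix (Fin 2) (Fin 2) ℂ)
    (hJ : (choi K).IsHermitian)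
    (hdeg : 2 ≤ (Finset.univ.filter
      fun q => hJ.eigenvalues q = ⨆ p, hJ.eigenvalues p).card) :
    ∃ u v : Fin 2 → ℂ,
      (∑ a, Complex.normSq (u a)) = 1 ∧ (∑ a, Complex.normSq (v a)) = 1 ∧
      fid K (Matrix.vecMulVec (fun q => u q.1 * v q.2) (star fun q => u q.1 * v q.2))
        = ((((⨆ p, hJ.eigenvalues p) / 2 : ℝ)) : ℂ) ∧
      IsGreatest (fidSet K) ((⨆ p, hJ.eigenvalues p) / 2) := by
  obtain ⟨k, hk, l, hl, hkl⟩ := Finset.one_lt_card.mp hdeg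
  rw [Finset.mem_filter] at hk hl
  obtain ⟨a, b, ha, hb, heig⟩ := hJ.exists_unit_tensor_mulVec_eq_smul hkl (hl.2.trans hk.2.symm)
  have hfid := fid_vecMulVec_tensor_star K ha hb heig
  rw [hk.2, Fintype.card_fin, Nat.cast_ofNat, ← Complex.ofReal_ofNat, ← Complex.ofReal_div]
    at hfid
  replace ha : ∑ i, Complex.normSq (star a i) = 1 := by simpa using ha
  replace hb : ∑ i, Complex.normSq (star b i) = 1 := by simpa using hb
  refine ⟨star b, star a, hb, ha, hfid, ⟨_, isDensity_vecMulVec_tensor hb ha, hfid⟩, ?_⟩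
  rintro r ⟨ρ, hρ, hr⟩
  have hle := fid_le_iSup_eigenvalues_div_card hJ hρ
  rwa [hr, Fintype.card_fin, Nat.cast_ofNat, Complex.real_le_real] at hle

/-- If the largest eigenvalue `λ_max` of the Choi matrix of a qubit
channel `N` has multiplicity at least `2`, then the maximum entanglement fidelity
`O(N) = λ_max/2` is attained by a separable input: there are unit vectors `u, v ∈ ℂ²`
with `⟨φ, ((id⊗N)((u⊗v)(u⊗v)†)) φ⟩ = λ_max/2 = O(N)`. -/
theorem stmt_19 {ι : Type*} [Fintype ι]
    (K : ι → Matrix (Fin 2) (Fin 2) ℂ)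
    (hK : ∑ i, (K i)ᴴ * K i = 1)
    (hJ : (choi K).IsHermitian)
    (hdeg : 2 ≤ (Finset.univ.filter
      fun q => hJ.eigenvalues q = ⨆ p, hJ.eigenvalues p).card) :
    ∃ u v : Fin 2 → ℂ,
      (∑ a, Complex.normSq (u a)) = 1 ∧ (∑ a, Complex.normSq (v a)) = 1 ∧
      fid K (Matrix.vecMulVec (fun q => u q.1 * v q.2) (star fun q => u q.1 * v q.2))
        = ((((⨆ p, hJ.eigenvalues p) / 2 : ℝ)) : ℂ) ∧
      IsGreatest (fidSet K) ((⨆ p, hJ.eigenvalues p) / 2) :=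
  stmt_19_general K hJ hdeg
end
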